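/- With the same setup, if l_x > o_y (the r_x-th run of x is longer than the available prefix o_y of the r_y-th run of y), then SP(x, y, r_x, r_y, o_y) = min(SP(x, y, r_x, r_y, o_y − 1) + d, SP(y, x, r_y − 1, r_x, l_x − o_y) + d·o_y), where SP(y, x, ·, ·, ·) is the symmetric subproblem with the roles of x and y swapped. -/

import Mathlib

open scoped BigOperators

variable {α : Type*}

/-- `xb` is the expansion of `x` obtained by replacing the `i`-th letter of `x`
with `ks[i] ≥ 1` consecutive copies of itself (equivalently, by extending runs). -/
def IsExpansionWith (x : List α) (ks : List ℕ) (xb : List α) : Prop :=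
  ks.length = x.length ∧ (∀ k ∈ ks, 1 ≤ k) ∧
    xb = (x.zip ks).flatMap fun p => List.replicate p.2 p.1

/-- `xb` is an expansion of `x` (obtained by extending runs). -/
def IsExpansion (x xb : List α) : Prop := ∃ ks, IsExpansionWith x ks xb

/-- The cost of a correspondence: sum of pointwise distances. -/
def corrCost (d : α → α → ℝ) (xb yb : List α) : ℝ :=
  ((xb.zip yb).map fun p => d p.1 p.2).sum

/-- A correspondence between `x` and `y`: a pair of equal-length expansions. -/
def IsCorrespondence (x y xb yb : List α) : Prop :=
  IsExpansion x xb ∧ IsExpansion y yb ∧ xb.length = yb.length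

/-- Dynamic time warping distance: minimum cost of a correspondence. -/
noncomputable def dtw (d : α → α → ℝ) (x y : List α) : ℝ :=
  sInf {c | ∃ xb yb, IsCorrespondence x y xb yb ∧ c = corrCost d xb yb}

/-- The maximal runs of equal letters of a list. -/
def runsOf [DecidableEq α] (x : List α) : List (List α) := x.splitBy (· == ·)

/-- Number of runs. -/
def numRuns [DecidableEq α] (x : List α) : ℕ := (runsOf x).length

/-- Length of the final run. -/
def lastRunLen [DecidableEq α] (x : List α) : ℕ := ((runsOf x).getLastD []).length

/-- Length of the `i`-th run (0-indexed). -/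
def runLen [DecidableEq α] (x : List α) (i : ℕ) : ℕ := ((runsOf x).getD i []).length

/-- The letter populating the `i`-th run (0-indexed). -/
def runLetter [DecidableEq α] [Inhabited α] (x : List α) (i : ℕ) : α :=
  ((runsOf x).getD i []).headI

/-- The concatenation of the first `k` runs of `x`. -/
def firstRuns [DecidableEq α] (k : ℕ) (x : List α) : List α := ((runsOf x).take k).flatten

/-- The prefix of `y` consisting of its first `ry` runs, up through the `oy`-th
letter of the `ry`-th run (runs are 1-indexed here). -/
def runPrefix [DecidableEq α] (ry oy : ℕ) (y : List α) : List α :=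
  firstRuns (ry - 1) y ++ ((runsOf y).getD (ry - 1) []).take oy

/-- The subproblem `SP(x, y, rx, ry, oy)`: the minimum cost of a correspondence
between the first `rx` runs of `x` and the prefix of `y` ending at the `oy`-th
letter of its `ry`-th run, under the constraint that the final (`ry`-th) run of
the `y`-prefix is not extended; `⊤` if no such correspondence exists. -/
noncomputable def SP [DecidableEq α] (d : α → α → ℝ) (x y : List α) (rx ry oy : ℕ) : EReal :=
  sInf ((fun p : List α × List α => ((corrCost d p.1 p.2 : ℝ) : EReal)) ''
    {p | IsCorrespondence (firstRuns rx x) (runPrefix ry oy y) p.1 p.2 ∧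
         (0 < oy → lastRunLen p.2 = oy)})

/-- Generalized edit distance over a metric with null character `nul`:
insertion/deletion of `l` costs `d nul l`, substitution of `l` by `l'` costs `d l l'`. -/
noncomputable def ged (d : α → α → ℝ) (nul : α) : List α → List α → ℝ
  | [], [] => 0
  | [], b :: ys => d nul b + ged d nul [] ys
  | a :: xs, [] => d nul a + ged d nul xs []
  | a :: xs, b :: ys =>
      min (d a b + ged d nul xs ys)
        (min (d nul a + ged d nul xs (b :: ys)) (d nul b + ged d nul (a :: xs) ys))
  termination_by x y => x.length + y.length

/-- Simple (Hamming/Levenshtein) edit distance: unit-cost insertions, deletions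
and substitutions. -/
def edH [DecidableEq α] : List α → List α → ℕ
  | [], ys => ys.length
  | xs, [] => xs.length
  | a :: xs, b :: ys =>
      min ((if a = b then 0 else 1) + edH xs ys)
        (min (1 + edH xs (b :: ys)) (1 + edH (a :: xs) ys))
  termination_by x y => x.length + y.length

/-- Simple edit distance with only unit-cost insertions and deletions. -/
def edS [DecidableEq α] : List α → List α → ℕ
  | [], ys => ys.length
  | xs, [] => xs.length
  | a :: xs, b :: ys =>
      if a = b then
        min (edS xs ys) (min (1 + edS xs (b :: ys)) (1 + edS (a :: xs) ys))
      else
        min (1 + edS xs (b :: ys)) (1 + edS (a :: xs) ys)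
  termination_by x y => x.length + y.length

/-- The padded string `p(x) = ∅ x₁ ∅ x₂ ∅ ⋯ xₙ ∅`. -/
def pad (nul : α) (x : List α) : List α := nul :: x.flatMap fun a => [a, nul]

/-- The `r`-simplification for edit distance: remove all letters of magnitude at most `r`. -/
noncomputable def sEd [MetricSpace α] (nul : α) (r : ℝ) (x : List α) : List α :=
  x.filter fun l => decide (r < dist nul l)

/-!
Write the first `rx` runs of `x` as `Wx ++ a ^ lx` and the `y`-prefix as `Wy ++ b ^ oy`, where
`Wx` does not end in `a` and `Wy` does not end in `b`. A feasible correspondence expands them to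
`u₀ ++ a ^ m` and `w ++ b ^ oy` with `m ≥ lx`. Since `m ≥ lx > oy`, the final `oy` columns are
all `(a, b)`. If `m > lx`, the last column can be removed, giving the `oy - 1` subproblem;
if `m = lx`, the final `oy` columns are removed, which leaves `a ^ (lx - oy)` unstretched at the
end of the `x`-side: the subproblem with `x` and `y` swapped. Both operations are bijections
between feasible sets that shift the cost by a constant, so the infima follow.
-/

open List

lemma eq_replicate_of_isChain_eq [Inhabited α] {l : List α} (h : l.IsChain (· = ·)) :
    l = replicate l.length l.headI := by
  cases l with
  | nil => rfl
  | cons a t =>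
    rw [isChain_cons_eq_iff_eq_replicate] at h
    rw [length_cons, replicate_succ, headI_cons, ← h]

section Runs

variable [DecidableEq α]

lemma runsOf_append_replicate {w : List α} {a : α} {n : ℕ} (hn : n ≠ 0)
    (hw : w.getLast? ≠ some a) :
    runsOf (w ++ replicate n a) = runsOf w ++ [replicate n a] := by
  rw [runsOf, splitBy_append, splitBy_of_isChain (by simpa)
    (isChain_replicate_of_rel n (beq_self_eq_true a))]
  · rfl
  · simp only [head?_replicate, hn, if_false, Option.mem_def, Option.some.injEq,
      beq_eq_false_iff_ne]
    rintro x hx _ rfl rfl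
    exact hw hx

lemma lastRunLen_append_replicate {w : List α} {a : α} {n : ℕ} (hn : n ≠ 0)
    (hw : w.getLast? ≠ some a) : lastRunLen (w ++ replicate n a) = n := by
  rw [lastRunLen, runsOf_append_replicate hn hw, getLastD_concat, length_replicate]

lemma lt_numRuns_of_runLen_ne_zero {z : List α} {k : ℕ} (h : runLen z k ≠ 0) :
    k < numRuns z := by
  by_contra! hk
  exact h (by rw [runLen, getD_eq_default _ _ hk, length_nil])

variable [Inhabited α]

lemma getD_runsOf (z : List α) (k : ℕ) :
    (runsOf z).getD k [] = replicate (runLen z k) (runLetter z k) := by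
  rw [runLen, runLetter]
  rcases lt_or_ge k (runsOf z).length with h | h
  · rw [getD_eq_getElem _ _ h]
    exact eq_replicate_of_isChain_eq
      ((isChain_of_mem_splitBy (getElem_mem h)).imp fun _ _ => beq_iff_eq.mp)
  · rw [getD_eq_default _ _ h]
    rfl

lemma firstRuns_succ (z : List α) (k : ℕ) :
    firstRuns (k + 1) z = firstRuns k z ++ replicate (runLen z k) (runLetter z k) := by
  rw [firstRuns, firstRuns, take_add_one, flatten_append, ← getD_runsOf, getD_eq_getElem?_getD]
  cases (runsOf z)[k]? <;> simp

lemma runPrefix_eq_append_replicate {z : List α} {k n : ℕ} (hn : n ≤ runLen z (k - 1)) :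
    runPrefix k n z = firstRuns (k - 1) z ++ replicate n (runLetter z (k - 1)) := by
  rw [runPrefix, getD_runsOf, take_replicate, min_eq_left hn]

lemma getLast?_firstRuns_ne_runLetter {z : List α} {k : ℕ} (hk : k < numRuns z) :
    (firstRuns k z).getLast? ≠ some (runLetter z k) := by
  cases k with
  | zero => simp [firstRuns]
  | succ j =>
    rw [numRuns] at hk
    have hrun : ∀ i (hi : i < (runsOf z).length),
        (runsOf z)[i] = replicate (runLen z i) (runLetter z i) := fun i hi => by
      rw [← getD_eq_getElem _ [] hi, getD_runsOf]
    have hchain : (runsOf z).IsChain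
        fun g g' => ∃ hg hg', (g.getLast hg == g'.head hg') = false :=
      isChain_getLast_head_splitBy _ z
    obtain ⟨hj, hj', hsep⟩ := hchain.getElem j hk
    have hlast : (runsOf z)[j].getLast hj = runLetter z j := by simp [hrun]
    have hhead : (runsOf z)[j + 1].head hj' = runLetter z (j + 1) := by simp [hrun]
    have hlen : runLen z j ≠ 0 := by
      rw [hrun j (by omega)] at hj
      simpa using hj
    rw [hlast, hhead, beq_eq_false_iff_ne] at hsep
    simpa [firstRuns_succ, getLast?_replicate, hlen] using hsep

end Runs

section Expansion

variable {u v w : List α}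

lemma IsExpansion.append {w₁ w₂ : List α} (h₁ : IsExpansion u w₁) (h₂ : IsExpansion v w₂) :
    IsExpansion (u ++ v) (w₁ ++ w₂) := by
  obtain ⟨ks₁, hlen₁, hpos₁, rfl⟩ := h₁
  obtain ⟨ks₂, hlen₂, hpos₂, rfl⟩ := h₂
  refine ⟨ks₁ ++ ks₂, by simp [hlen₁, hlen₂], ?_, ?_⟩
  · simpa only [mem_append, or_imp, forall_and] using ⟨hpos₁, hpos₂⟩
  · rw [zip_append hlen₁.symm, flatMap_append]

lemma isExpansion_append_iff :
    IsExpansion (u ++ v) w ↔ ∃ w₁ w₂, IsExpansion u w₁ ∧ IsExpansion v w₂ ∧ w = w₁ ++ w₂ := by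
  refine ⟨fun ⟨ks, hlen, hpos, hw⟩ => ?_, fun ⟨w₁, w₂, h₁, h₂, hw⟩ => hw ▸ h₁.append h₂⟩
  rw [length_append] at hlen
  refine ⟨_, _, ⟨ks.take u.length, by simp; omega, fun k hk => hpos k (mem_of_mem_take hk), rfl⟩,
    ⟨ks.drop u.length, by simp; omega, fun k hk => hpos k (mem_of_mem_drop hk), rfl⟩, ?_⟩
  rw [hw, ← flatMap_append, ← zip_append (by simp; omega), take_append_drop]

lemma flatMap_zip_replicate (a : α) (ks : List ℕ) :
    ((replicate ks.length a).zip ks).flatMap (fun p => replicate p.2 p.1) =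
      replicate ks.sum a := by
  induction ks with
  | nil => rfl
  | cons k ks ih =>
    rw [length_cons, replicate_succ, zip_cons_cons, flatMap_cons, ih, sum_cons, replicate_add]

lemma isExpansion_replicate_iff {n : ℕ} {a : α} :
    IsExpansion (replicate n a) w ↔ ∃ m, n ≤ m ∧ (n = 0 → m = 0) ∧ w = replicate m a := by
  constructor
  · rintro ⟨ks, hlen, hpos, rfl⟩
    rw [length_replicate] at hlen
    subst hlen
    refine ⟨ks.sum, length_le_sum_of_one_le ks hpos, fun h => ?_, flatMap_zip_replicate a ks⟩
    simp [length_eq_zero_iff.1 h]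
  · rintro ⟨m, hnm, hm, rfl⟩
    cases n with
    | zero => exact ⟨[], rfl, by simp, by simp [hm rfl]⟩
    | succ j =>
      let ks := (m - j) :: replicate j 1
      have hsum : ks.sum = m := by simp [ks]; omega
      refine ⟨ks, by simp [ks], fun k hk => ?_, ?_⟩
      · simp only [ks, mem_cons, mem_replicate] at hk
        omega
      · rw [← hsum, ← flatMap_zip_replicate]
        simp [ks]

lemma isExpansion_append_replicate_iff {W : List α} {n : ℕ} {a : α} :
    IsExpansion (W ++ replicate n a) w ↔
      ∃ w₀ m, IsExpansion W w₀ ∧ n ≤ m ∧ (n = 0 → m = 0) ∧ w = w₀ ++ replicate m a := by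
  simp only [isExpansion_append_iff, isExpansion_replicate_iff]
  constructor
  · rintro ⟨w₀, _, hw₀, ⟨m, hnm, hm, rfl⟩, rfl⟩
    exact ⟨w₀, m, hw₀, hnm, hm, rfl⟩
  · rintro ⟨w₀, m, hw₀, hnm, hm, rfl⟩
    exact ⟨w₀, _, hw₀, ⟨m, hnm, hm, rfl⟩, rfl⟩

lemma IsExpansion.getLast?_eq (h : IsExpansion u w) : w.getLast? = u.getLast? := by
  rcases eq_nil_or_concat u with rfl | ⟨L, c, rfl⟩
  · obtain ⟨ks, -, -, rfl⟩ := h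
    rfl
  · rw [concat_eq_append, ← replicate_one, isExpansion_append_replicate_iff] at h
    obtain ⟨w₀, m, -, hm, -, rfl⟩ := h
    simp [getLast?_replicate, show m ≠ 0 by omega]

end Expansion

section Cost

variable (d : α → α → ℝ)

lemma corrCost_append {u₁ v₁ : List α} (u₂ v₂ : List α) (h : u₁.length = v₁.length) :
    corrCost d (u₁ ++ u₂) (v₁ ++ v₂) = corrCost d u₁ v₁ + corrCost d u₂ v₂ := by
  rw [corrCost, corrCost, corrCost, zip_append h, map_append, sum_append]

lemma corrCost_singleton (a b : α) : corrCost d [a] [b] = d a b := by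
  simp [corrCost]

lemma corrCost_replicate (n : ℕ) (a b : α) :
    corrCost d (replicate n a) (replicate n b) = n * d a b := by
  rw [corrCost, zip_replicate, min_self, map_replicate, sum_replicate, nsmul_eq_mul]

lemma corrCost_comm {d : α → α → ℝ} (hd : ∀ a b, d a b = d b a) (u v : List α) :
    corrCost d u v = corrCost d v u := by
  rw [corrCost, corrCost, ← zip_swap, map_map]
  simp only [Function.comp_def, Prod.fst_swap, Prod.snd_swap, hd]

end Cost

noncomputable def EReal.addRightOrderIso (c : ℝ) : EReal ≃o EReal where
  toFun t := t + c
  invFun t := t - c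
  left_inv _ := EReal.add_sub_cancel_right
  right_inv _ := EReal.sub_add_cancel
  map_rel_iff' := (EReal.addLECancellable_coe c).add_le_add_iff_right

lemma EReal.sInf_image_add_coe (T : Set EReal) (c : ℝ) :
    sInf ((· + (c : EReal)) '' T) = sInf T + c := by
  rw [sInf_image]
  exact ((EReal.addRightOrderIso c).map_sInf T).symm

section Subproblem

variable [DecidableEq α]

def spFeasible (X Y : List α) (o : ℕ) : Set (List α × List α) :=
  {p | IsCorrespondence X Y p.1 p.2 ∧ (0 < o → lastRunLen p.2 = o)}

lemma length_eq_of_mem_spFeasible {X Y : List α} {o : ℕ} {p : List α × List α}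
    (hp : p ∈ spFeasible X Y o) : p.1.length = p.2.length :=
  hp.1.2.2

lemma mem_spFeasible_append_replicate {X W : List α} {b : α} {j : ℕ}
    (hW : W.getLast? ≠ some b) {p : List α × List α} :
    p ∈ spFeasible X (W ++ replicate j b) j ↔
      ∃ w, IsExpansion X p.1 ∧ IsExpansion W w ∧ p.2 = w ++ replicate j b ∧
        p.1.length = w.length + j := by
  obtain ⟨u, v⟩ := p
  simp only [spFeasible, Set.mem_ofPred_eq, IsCorrespondence, isExpansion_append_replicate_iff]
  constructor
  · rintro ⟨⟨hu, ⟨w, m, hw, hjm, hj0, rfl⟩, hlen⟩, hlast⟩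
    obtain rfl : m = j := by
      rcases Nat.eq_zero_or_pos j with rfl | hj
      · exact hj0 rfl
      · rw [← hlast hj, lastRunLen_append_replicate (by omega) (hw.getLast?_eq ▸ hW)]
    exact ⟨w, hu, hw, rfl, by simpa using hlen⟩
  · rintro ⟨w, hu, hw, rfl, hlen⟩
    exact ⟨⟨hu, ⟨w, j, hw, le_rfl, id, rfl⟩, by simpa using hlen⟩,
      fun hj => lastRunLen_append_replicate hj.ne' (hw.getLast?_eq ▸ hW)⟩

lemma spFeasible_append_replicate_eq_union {Wx Wy : List α} {a b : α} {lx oy : ℕ}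
    (ha : Wx.getLast? ≠ some a) (hb : Wy.getLast? ≠ some b) (hoy : 1 ≤ oy) (hlx : oy < lx) :
    spFeasible (Wx ++ replicate lx a) (Wy ++ replicate oy b) oy =
      (fun p => (p.1 ++ [a], p.2 ++ [b])) ''
          spFeasible (Wx ++ replicate lx a) (Wy ++ replicate (oy - 1) b) (oy - 1) ∪
        (fun p => (p.1 ++ replicate oy a, p.2 ++ replicate oy b)) ''
          (Prod.swap '' spFeasible Wy (Wx ++ replicate (lx - oy) a) (lx - oy)) := by
  have hb_succ : replicate oy b = replicate (oy - 1) b ++ [b] := by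
    rw [← replicate_one, ← replicate_add, Nat.sub_add_cancel hoy]
  ext ⟨u, v⟩
  simp only [Set.mem_union, Set.mem_image, Prod.exists, Prod.swap_prod_mk, Prod.mk.injEq,
    mem_spFeasible_append_replicate ha, mem_spFeasible_append_replicate hb,
    isExpansion_append_replicate_iff]
  constructor
  · rintro ⟨w, ⟨u₀, m, hu₀, hm, -, rfl⟩, hw, rfl, hlen⟩
    rw [length_append, length_replicate] at hlen
    rcases hm.lt_or_eq with hm | rfl
    · refine Or.inl ⟨u₀ ++ replicate (m - 1) a, w ++ replicate (oy - 1) b,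
        ⟨w, ⟨u₀, m - 1, hu₀, by omega, by omega, rfl⟩, hw, rfl, by simp; omega⟩, ?_, ?_⟩
      · rw [append_assoc, ← replicate_one, ← replicate_add, Nat.sub_add_cancel (by omega)]
      · rw [append_assoc, ← hb_succ]
    · refine Or.inr ⟨_, _, ⟨w, u₀ ++ replicate (lx - oy) a,
        ⟨u₀, hw, hu₀, rfl, by omega⟩, rfl, rfl⟩, ?_, rfl⟩
      rw [append_assoc, ← replicate_add, Nat.sub_add_cancel hlx.le]
  · rintro (⟨u', v', ⟨w, ⟨u₀, m, hu₀, hm, -, rfl⟩, hw, rfl, hlen⟩, rfl, rfl⟩ |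
        ⟨u', v', ⟨w', v'', ⟨u₀, hw', hu₀, rfl, hlen⟩, rfl, rfl⟩, rfl, rfl⟩)
    · refine ⟨w, ⟨u₀, m + 1, hu₀, by omega, by omega, ?_⟩, hw, ?_, by simp at hlen ⊢; omega⟩
      · rw [append_assoc, ← replicate_one, ← replicate_add]
      · rw [append_assoc, ← hb_succ]
    · refine ⟨w', ⟨u₀, lx, hu₀, le_rfl, by omega, ?_⟩, hw', rfl, by simp at hlen ⊢; omega⟩
      rw [append_assoc, ← replicate_add, Nat.sub_add_cancel hlx.le]

end Subproblem

section MinCost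

variable (d : α → α → ℝ)

noncomputable def minCost (S : Set (List α × List α)) : EReal :=
  sInf ((fun p => ((corrCost d p.1 p.2 : ℝ) : EReal)) '' S)

lemma SP_eq_minCost [DecidableEq α] (x y : List α) (rx ry oy : ℕ) :
    SP d x y rx ry oy = minCost d (spFeasible (firstRuns rx x) (runPrefix ry oy y) oy) :=
  rfl

lemma minCost_union (S T : Set (List α × List α)) :
    minCost d (S ∪ T) = min (minCost d S) (minCost d T) := by
  rw [minCost, Set.image_union, sInf_union]
  rfl

lemma minCost_image_append {S : Set (List α × List α)}
    (hS : ∀ p ∈ S, p.1.length = p.2.length) (u v : List α) :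
    minCost d ((fun p => (p.1 ++ u, p.2 ++ v)) '' S) = minCost d S + corrCost d u v := by
  rw [minCost, minCost, ← EReal.sInf_image_add_coe, Set.image_image, Set.image_image]
  refine congrArg sInf (Set.image_congr fun p hp => ?_)
  rw [corrCost_append d u v (hS p hp), EReal.coe_add]

lemma minCost_image_swap {d : α → α → ℝ} (hd : ∀ a b, d a b = d b a)
    (S : Set (List α × List α)) : minCost d (Prod.swap '' S) = minCost d S := by
  simp only [minCost, Set.image_image, Prod.fst_swap, Prod.snd_swap, corrCost_comm hd]

end MinCost

theorem stmt16_general [MetricSpace α] [DecidableEq α] [Inhabited α] (x y : List α)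
    (rx ry oy : ℕ) (hrx : 1 ≤ rx)
    (hoy : 1 ≤ oy) (hoy' : oy ≤ runLen y (ry - 1))
    (hcase : oy < runLen x (rx - 1)) :
    SP dist x y rx ry oy =
      min (SP dist x y rx ry (oy - 1) +
            ((dist (runLetter x (rx - 1)) (runLetter y (ry - 1)) : ℝ) : EReal))
          (SP dist y x (ry - 1) rx (runLen x (rx - 1) - oy) +
            ((dist (runLetter x (rx - 1)) (runLetter y (ry - 1)) *
              (oy : ℝ) : ℝ) : EReal)) := by
  have hx : firstRuns rx x =
      firstRuns (rx - 1) x ++ replicate (runLen x (rx - 1)) (runLetter x (rx - 1)) := by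
    rw [← firstRuns_succ, Nat.sub_add_cancel hrx]
  have ha := getLast?_firstRuns_ne_runLetter
    (lt_numRuns_of_runLen_ne_zero (by omega : runLen x (rx - 1) ≠ 0))
  have hb := getLast?_firstRuns_ne_runLetter
    (lt_numRuns_of_runLen_ne_zero (by omega : runLen y (ry - 1) ≠ 0))
  rw [SP_eq_minCost, SP_eq_minCost, SP_eq_minCost, hx, runPrefix_eq_append_replicate hoy',
    runPrefix_eq_append_replicate (by omega : oy - 1 ≤ _),
    runPrefix_eq_append_replicate (by omega : runLen x (rx - 1) - oy ≤ _),
    spFeasible_append_replicate_eq_union ha hb hoy hcase, minCost_union,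
    minCost_image_append, minCost_image_append, minCost_image_swap dist_comm,
    corrCost_singleton, corrCost_replicate, mul_comm]
  · rintro _ ⟨p, hp, rfl⟩
    exact (length_eq_of_mem_spFeasible hp).symm
  · exact fun p hp => length_eq_of_mem_spFeasible hp

/-- The recurrence for `SP(x, y, rx, ry, oy)` in the case `l_x > o_y`. -/
theorem stmt16 [MetricSpace α] [DecidableEq α] [Inhabited α] (x y : List α)
    (rx ry oy : ℕ) (hrx : 1 ≤ rx) (hrx' : rx ≤ numRuns x)
    (hry : 1 ≤ ry) (hry' : ry ≤ numRuns y)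
    (hoy : 1 ≤ oy) (hoy' : oy ≤ runLen y (ry - 1))
    (hcase : oy < runLen x (rx - 1)) :
    SP dist x y rx ry oy =
      min (SP dist x y rx ry (oy - 1) +
            ((dist (runLetter x (rx - 1)) (runLetter y (ry - 1)) : ℝ) : EReal))
          (SP dist y x (ry - 1) rx (runLen x (rx - 1) - oy) +
            ((dist (runLetter x (rx - 1)) (runLetter y (ry - 1)) *
              (oy : ℝ) : ℝ) : EReal)) :=
  stmt16_general x y rx ry oy hrx hoy hoy' hcase
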